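/- For every natural number n, the operator identity (X + q s D_q)(X + q³ s D_q) ⋯ (X + q^{2n-1} s D_q) = Σ_{k=0}^{n} [n choose k]_q · q^{kn} · h_{n-k}(X,s) · (s D_q)^k holds on the polynomial ring, where h_{n-k}(X,s) denotes multiplication by the polynomial h_{n-k}(x,s). -/

import Mathlib

/-!
The operators `x = X` and `a = s D_q` satisfy `a x = q x a + s`. In any `F`-algebra with such a
pair, `a ^ k x = q ^ k x a ^ k + [k] s a ^ (k - 1)`, so multiplying the normal-ordered sum
`∑ₖ [n, k] q ^ (k n) h_{n-k}(x) a ^ k` on the right by `x + q ^ (2n+1) a` and moving `x` to the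
left gives a normal-ordered sum again. Its coefficients are the ones for `n + 1` by the q-Pascal
rule, by `[n, k+1] [k+1] = [n, k] [n-k]`, and by the three-term recurrence
`h_{m+1} = x h_m + q ^ m [m] s h_{m-1}`, which is a coefficientwise identity for the explicit
formula defining `h`.
-/

noncomputable section

/-- The field `ℚ(q,s)` of rational functions in two indeterminates. -/
abbrev F : Type := FractionRing (MvPolynomial (Fin 2) ℚ)

/-- The indeterminate `q`. -/
def q : F := algebraMap (MvPolynomial (Fin 2) ℚ) F (MvPolynomial.X 0)

/-- The indeterminate `s`. -/
def s : F := algebraMap (MvPolynomial (Fin 2) ℚ) F (MvPolynomial.X 1)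

/-- The q-integer `[n]_q = 1 + q + ⋯ + q^{n-1}`. -/
def qInt (n : ℕ) : F := ∑ i ∈ Finset.range n, q ^ i

/-- The q-factorial `[n]_q! = ∏_{k=1}^n [k]_q`. -/
def qFact (n : ℕ) : F := ∏ k ∈ Finset.range n, qInt (k + 1)

/-- The q-binomial coefficient `[n choose k]_q = [n]_q!/([k]_q! [n-k]_q!)`. -/
def qBinom (n k : ℕ) : F := qFact n / (qFact k * qFact (n - k))

/-- The operator `X` of multiplication by `x` on `F[x]`. -/
def Xop : Module.End F (Polynomial F) := LinearMap.mulLeft F Polynomial.X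

/-- Division by `x` (discarding the constant term), as a linear map. -/
def divXL : Polynomial F →ₗ[F] Polynomial F where
  toFun := Polynomial.divX
  map_add' p r := Polynomial.divX_add
  map_smul' a p := by
    ext n
    simp [Polynomial.coeff_divX, Polynomial.coeff_smul]

/-- The q-derivative `D_q f(x) = (f(qx) - f(x))/((q-1)x)`; it is the F-linear
operator on `F[x]` determined by `D_q x^n = [n]_q x^{n-1}`. -/
def Dq : Module.End F (Polynomial F) :=
  (q - 1)⁻¹ •
    (divXL ∘ₗ
      ((Polynomial.aeval (Polynomial.C q * Polynomial.X)).toLinearMap - LinearMap.id))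

/-- The polynomials `h_n(x,t) = Σ_j q^{j²} t^j [n]_q!/((1+q)⋯(1+q^j)·[j]_q!·[n-2j]_q!)
x^{n-2j}` (the parameter `t` will be specialized to `s` or `q²s`). -/
def h (t : F) (n : ℕ) : Polynomial F :=
  ∑ j ∈ Finset.range (n / 2 + 1),
    Polynomial.C (q ^ (j ^ 2) * t ^ j * qFact n /
        ((∏ i ∈ Finset.range j, (1 + q ^ (i + 1))) * qFact j * qFact (n - 2 * j))) *
      Polynomial.X ^ (n - 2 * j)


/-- `G(n) = (X + q s D_q)(X + q³ s D_q) ⋯ (X + q^{2n-1} s D_q)`,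
with the factor `(X + q^{2n-1} s D_q)` acting first. -/
def Gop : ℕ → Module.End F (Polynomial F)
  | 0 => 1
  | n + 1 => Gop n * (Xop + (q ^ (2 * n + 1) * s) • Dq)

open Finset Polynomial

lemma algebraMap_ne_zero_of_aeval_ne_zero {p : MvPolynomial (Fin 2) ℚ} (v : Fin 2 → ℚ)
    (hp : MvPolynomial.aeval v p ≠ 0) : algebraMap (MvPolynomial (Fin 2) ℚ) F p ≠ 0 := by
  rw [Ne, IsFractionRing.to_map_eq_zero_iff]
  rintro rfl
  exact hp (map_zero _)

-- Nonvanishing is checked by specializing `q` to `2`.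
lemma q_sub_one_ne_zero : q - 1 ≠ 0 := by
  have := algebraMap_ne_zero_of_aeval_ne_zero (p := MvPolynomial.X 0 - 1) (fun _ => 2)
    (by norm_num)
  simpa [q] using this

lemma one_add_q_pow_ne_zero (i : ℕ) : 1 + q ^ i ≠ 0 := by
  have := algebraMap_ne_zero_of_aeval_ne_zero (p := 1 + MvPolynomial.X 0 ^ i) (fun _ => 2)
    (by simp; positivity)
  simpa [q] using this

lemma qInt_succ_ne_zero (n : ℕ) : qInt (n + 1) ≠ 0 := by
  have := algebraMap_ne_zero_of_aeval_ne_zero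
    (p := ∑ i ∈ range (n + 1), MvPolynomial.X 0 ^ i) (fun _ => 2) (by simp; positivity)
  simpa [qInt, q] using this

@[simp] lemma qInt_zero : qInt 0 = 0 := by simp [qInt]

lemma qInt_succ (n : ℕ) : qInt (n + 1) = qInt n + q ^ n := sum_range_succ _ _

lemma qInt_add (a b : ℕ) : qInt (a + b) = qInt a + q ^ a * qInt b := by
  simp [qInt, sum_range_add, mul_sum, pow_add]

lemma qInt_mul_q_sub_one (n : ℕ) : qInt n * (q - 1) = q ^ n - 1 := geom_sum_mul q n

@[simp] lemma qFact_zero : qFact 0 = 1 := by simp [qFact]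

lemma qFact_succ (n : ℕ) : qFact (n + 1) = qFact n * qInt (n + 1) := prod_range_succ _ _

lemma qFact_ne_zero (n : ℕ) : qFact n ≠ 0 :=
  prod_ne_zero_iff.2 fun k _ => qInt_succ_ne_zero k

lemma qBinom_zero_right (n : ℕ) : qBinom n 0 = 1 := by
  simp [qBinom, qFact_ne_zero]

lemma qBinom_self (n : ℕ) : qBinom n n = 1 := by
  simp [qBinom, qFact_ne_zero]

lemma qBinom_succ_mul_qInt {n k : ℕ} (hk : k < n) :
    qBinom n (k + 1) * qInt (k + 1) = qBinom n k * qInt (n - k) := by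
  obtain ⟨d, rfl⟩ := Nat.exists_eq_add_of_lt hk
  rw [qBinom, qBinom, show k + d + 1 - (k + 1) = d by omega,
    show k + d + 1 - k = d + 1 by omega, qFact_succ k, qFact_succ d]
  have := qFact_ne_zero k
  have := qFact_ne_zero d
  have := qInt_succ_ne_zero k
  have := qInt_succ_ne_zero d
  field_simp

lemma qBinom_succ_succ {n k : ℕ} (hk : k < n) :
    qBinom (n + 1) (k + 1) = qBinom n (k + 1) + q ^ (n - k) * qBinom n k := by
  obtain ⟨d, rfl⟩ := Nat.exists_eq_add_of_lt hk
  rw [qBinom, qBinom, qBinom, show k + d + 1 + 1 - (k + 1) = d + 1 by omega,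
    show k + d + 1 - (k + 1) = d by omega, show k + d + 1 - k = d + 1 by omega,
    qFact_succ (k + d + 1), show k + d + 1 + 1 = (d + 1) + (k + 1) by ring, qInt_add,
    qFact_succ k, qFact_succ d]
  have := qFact_ne_zero k
  have := qFact_ne_zero d
  have := qFact_ne_zero (k + d + 1)
  have := qInt_succ_ne_zero k
  have := qInt_succ_ne_zero d
  field_simp

section HermitePolynomials

def qDescFact (n k : ℕ) : F := ∏ i ∈ range k, qInt (n - i)

lemma qDescFact_succ_left (n k : ℕ) :
    qDescFact (n + 1) (k + 1) = qDescFact n k * qInt (n + 1) := by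
  simp [qDescFact, prod_range_succ']

lemma qDescFact_succ_right (n k : ℕ) : qDescFact n (k + 1) = qDescFact n k * qInt (n - k) :=
  prod_range_succ _ _

lemma qDescFact_eq_zero {n k : ℕ} (h : n < k) : qDescFact n k = 0 :=
  prod_eq_zero (mem_range.2 h) (by simp)

lemma qFact_eq_qDescFact_mul {n k : ℕ} (h : k ≤ n) :
    qFact n = qDescFact n k * qFact (n - k) := by
  induction k with
  | zero => simp [qDescFact]
  | succ k ih =>
    rw [ih (by omega), qDescFact_succ_right, show n - k = n - (k + 1) + 1 by omega, qFact_succ,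
      show n - (k + 1) + 1 = n - k by omega]
    ring

variable (t : F)

def hWeight (j : ℕ) : F :=
  q ^ (j ^ 2) * t ^ j / ((∏ i ∈ range j, (1 + q ^ (i + 1))) * qFact j)

-- `qDescFact n (2 * j)` replaces `[n]! / [n - 2j]!`: unlike that quotient (a junk value under
-- truncated subtraction) it vanishes for `2 * j > n`, so sums over `j` may run past `n / 2`.
def hCoeff (n j : ℕ) : F := hWeight t j * qDescFact n (2 * j)

lemma hWeight_succ (j : ℕ) :
    hWeight t (j + 1) * ((1 + q ^ (j + 1)) * qInt (j + 1)) =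
      q ^ (2 * j + 1) * t * hWeight t j := by
  have := prod_ne_zero_iff.2 fun i (_ : i ∈ range j) => one_add_q_pow_ne_zero (i + 1)
  have := one_add_q_pow_ne_zero (j + 1)
  have := qFact_ne_zero j
  have := qInt_succ_ne_zero j
  rw [hWeight, hWeight, prod_range_succ, qFact_succ,
    show (j + 1) ^ 2 = j ^ 2 + (2 * j + 1) by ring]
  field_simp
  ring

lemma hCoeff_zero_right (n : ℕ) : hCoeff t n 0 = 1 := by
  simp [hCoeff, hWeight, qDescFact]

lemma hCoeff_succ_succ (n j : ℕ) :
    hCoeff t (n + 2) (j + 1) =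
      hCoeff t (n + 1) (j + 1) + q ^ (n + 1) * qInt (n + 1) * t * hCoeff t n j := by
  rcases lt_or_ge n (2 * j) with hn | hn
  · simp [hCoeff, qDescFact_eq_zero hn, qDescFact_eq_zero (show n + 1 < 2 * (j + 1) by omega),
      qDescFact_eq_zero (show n + 2 < 2 * (j + 1) by omega)]
  obtain ⟨d, rfl⟩ := Nat.exists_eq_add_of_le hn
  have hgap : qInt (2 * j + d + 2) = qInt d + q ^ d * ((1 + q ^ (j + 1)) * qInt (j + 1)) := by
    rw [show 2 * j + d + 2 = d + ((j + 1) + (j + 1)) by ring, qInt_add, qInt_add]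
    ring
  have hw := hWeight_succ t j
  simp only [hCoeff, show 2 * (j + 1) = 2 * j + 1 + 1 by ring, qDescFact_succ_left,
    qDescFact_succ_right, show 2 * j + d - 2 * j = d by omega]
  rw [show 2 * j + d + 1 + 1 = 2 * j + d + 2 by ring, hgap]
  linear_combination (q ^ d * qDescFact (2 * j + d) (2 * j) * qInt (2 * j + d + 1)) * hw

lemma h_eq_sum_hCoeff {n N : ℕ} (hN : n / 2 < N) :
    h t n = ∑ j ∈ range N, C (hCoeff t n j) * X ^ (n - 2 * j) := by
  have hcoeff : ∀ j ∈ range (n / 2 + 1), q ^ (j ^ 2) * t ^ j * qFact n /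
      ((∏ i ∈ range j, (1 + q ^ (i + 1))) * qFact j * qFact (n - 2 * j)) = hCoeff t n j := by
    intro j hj
    have := qFact_ne_zero (n - 2 * j)
    rw [hCoeff, hWeight, qFact_eq_qDescFact_mul (show 2 * j ≤ n by grind)]
    field_simp
  rw [h, sum_congr rfl fun j hj => by rw [hcoeff j hj]]
  refine sum_subset (range_subset_range.2 (by omega)) fun j _ hj => ?_
  simp [hCoeff, qDescFact_eq_zero (show n < 2 * j by grind)]

lemma h_zero : h t 0 = 1 := by
  simp [h_eq_sum_hCoeff t (n := 0) (N := 1) (by simp), hCoeff_zero_right]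

lemma h_one : h t 1 = X := by
  simp [h_eq_sum_hCoeff t (n := 1) (N := 1) (by simp), hCoeff_zero_right]

lemma h_succ_succ (n : ℕ) :
    h t (n + 2) = X * h t (n + 1) + C (q ^ (n + 1) * qInt (n + 1) * t) * h t n := by
  have hterm : ∀ j ∈ range (n / 2 + 1),
      C (hCoeff t (n + 2) (j + 1)) * X ^ (n + 2 - 2 * (j + 1)) =
        X * (C (hCoeff t (n + 1) (j + 1)) * X ^ (n + 1 - 2 * (j + 1))) +
          C (q ^ (n + 1) * qInt (n + 1) * t) * (C (hCoeff t n j) * X ^ (n - 2 * j)) := by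
    intro j hj
    have hj : 2 * j ≤ n := by grind
    rw [hCoeff_succ_succ, C_add, add_mul, C_mul, show n + 2 - 2 * (j + 1) = n - 2 * j by omega]
    congr 1
    · rcases hj.lt_or_eq with hj | rfl
      · rw [mul_left_comm, ← pow_succ']
        congr 2
        omega
      · simp [hCoeff, qDescFact_eq_zero (show 2 * j + 1 < 2 * (j + 1) by omega)]
    · ring
  rw [h_eq_sum_hCoeff t (N := n / 2 + 2) (by omega),
    h_eq_sum_hCoeff t (N := n / 2 + 2) (by omega),
    h_eq_sum_hCoeff t (n := n) (N := n / 2 + 1) (by omega), mul_sum, mul_sum, sum_range_succ',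
    sum_range_succ' (fun j => X * (C (hCoeff t (n + 1) j) * X ^ (n + 1 - 2 * j))),
    sum_congr rfl hterm, sum_add_distrib]
  simp only [hCoeff_zero_right, C_1, one_mul, Nat.mul_zero, Nat.sub_zero, pow_succ']
  abel

lemma h_succ (n : ℕ) : h t (n + 1) = X * h t n + C (q ^ n * qInt n * t) * h t (n - 1) := by
  cases n with
  | zero => simp [h_zero, h_one]
  | succ n => exact h_succ_succ t n

end HermitePolynomials

section NormalOrdering

variable {R : Type*} [Ring R] [Algebra F R] {x a : R} {t : F}

lemma pow_mul_eq_of_mul_eq (hax : a * x = q • (x * a) + t • 1) (k : ℕ) :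
    a ^ k * x = q ^ k • (x * a ^ k) + (qInt k * t) • a ^ (k - 1) := by
  induction k with
  | zero => simp
  | succ k ih =>
    have hlow : (qInt k * t) • (a * a ^ (k - 1)) = (qInt k * t) • a ^ k := by
      cases k <;> simp [pow_succ']
    calc a ^ (k + 1) * x = a * (a ^ k * x) := by rw [pow_succ', mul_assoc]
      _ = q ^ k • ((a * x) * a ^ k) + (qInt k * t) • a ^ k := by
        rw [ih, mul_add, mul_smul_comm, mul_smul_comm, hlow, ← mul_assoc, mul_assoc a x]
      _ = q ^ (k + 1) • (x * a ^ (k + 1)) + (qInt (k + 1) * t) • a ^ k := by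
        rw [hax, add_mul, smul_mul_assoc, smul_mul_assoc, one_mul, mul_assoc, ← pow_succ',
          smul_add, smul_smul, smul_smul, ← pow_succ, qInt_succ, add_mul, add_smul]
        abel

lemma aeval_h_succ (m : ℕ) :
    aeval x (h t (m + 1)) =
      x * aeval x (h t m) + (q ^ m * qInt m * t) • aeval x (h t (m - 1)) := by
  rw [h_succ, map_add, map_mul, map_mul, aeval_X, aeval_C, Algebra.smul_def]

def normalCoeff (n k : ℕ) : F := qBinom n k * q ^ (k * n)

lemma normalCoeff_zero_right (n : ℕ) : normalCoeff n 0 = 1 := by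
  simp [normalCoeff, qBinom_zero_right]

lemma normalCoeff_self_succ (n : ℕ) :
    normalCoeff (n + 1) (n + 1) = normalCoeff n n * q ^ (2 * n + 1) := by
  simp only [normalCoeff, qBinom_self, one_mul, ← pow_add]
  ring_nf

lemma normalCoeff_succ_succ {n k : ℕ} (hk : k < n) :
    normalCoeff (n + 1) (k + 1) =
      normalCoeff n (k + 1) * q ^ (k + 1) + normalCoeff n k * q ^ (2 * n + 1) := by
  obtain ⟨d, rfl⟩ := Nat.exists_eq_add_of_lt hk
  simp only [normalCoeff, qBinom_succ_succ hk, show k + d + 1 - k = d + 1 by omega]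
  ring

lemma normalCoeff_succ_mul_qInt {n k : ℕ} (hk : k < n) :
    normalCoeff n (k + 1) * qInt (k + 1) =
      normalCoeff n k * q ^ k * (q ^ (n - k) * qInt (n - k)) := by
  have hn : q ^ k * q ^ (n - k) = q ^ n := by rw [← pow_add]; congr 1; omega
  simp only [normalCoeff]
  linear_combination
    q ^ ((k + 1) * n) * qBinom_succ_mul_qInt hk - qBinom n k * q ^ (k * n) * qInt (n - k) * hn

variable (x a t) in
def normalTerm (n k : ℕ) : R := normalCoeff n k • (aeval x (h t (n - k)) * a ^ k)

lemma normalTerm_mul (hax : a * x = q • (x * a) + t • 1) (n k : ℕ) :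
    normalTerm x a t n k * x =
      (normalCoeff n k * q ^ k) • (x * aeval x (h t (n - k)) * a ^ k) +
        (normalCoeff n k * (qInt k * t)) • (aeval x (h t (n - k)) * a ^ (k - 1)) := by
  have hcomm : aeval x (h t (n - k)) * x = x * aeval x (h t (n - k)) := by
    simpa using congrArg (aeval x) (mul_comm (h t (n - k)) X)
  rw [normalTerm, smul_mul_assoc, mul_assoc, pow_mul_eq_of_mul_eq hax, mul_add, mul_smul_comm,
    mul_smul_comm, ← mul_assoc, hcomm, smul_add, smul_smul, smul_smul]

lemma sum_normalTerm_mul (hax : a * x = q • (x * a) + t • 1) (n : ℕ) :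
    (∑ k ∈ range (n + 1), normalTerm x a t n k) * x =
      ∑ k ∈ range (n + 1),
        (normalCoeff n k * q ^ k) • (aeval x (h t (n + 1 - k)) * a ^ k) := by
  have hrec : ∀ k ∈ range (n + 1),
      (normalCoeff n k * q ^ k) • (aeval x (h t (n + 1 - k)) * a ^ k) =
        (normalCoeff n k * q ^ k) • (x * aeval x (h t (n - k)) * a ^ k) +
          (normalCoeff n k * q ^ k * (q ^ (n - k) * qInt (n - k) * t)) •
            (aeval x (h t (n - k - 1)) * a ^ k) := by
    intro k hk
    rw [show n + 1 - k = n - k + 1 by grind, aeval_h_succ, add_mul, smul_add, smul_mul_assoc,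
      smul_smul]
  have hlower : ∀ k ∈ range n,
      (normalCoeff n (k + 1) * (qInt (k + 1) * t)) •
          (aeval x (h t (n - (k + 1))) * a ^ (k + 1 - 1)) =
        (normalCoeff n k * q ^ k * (q ^ (n - k) * qInt (n - k) * t)) •
          (aeval x (h t (n - k - 1)) * a ^ k) := by
    intro k hk
    rw [Nat.add_sub_cancel, Nat.sub_sub, ← mul_assoc, normalCoeff_succ_mul_qInt (mem_range.1 hk)]
    ring_nf
  rw [sum_mul, sum_congr rfl fun k _ => normalTerm_mul hax n k, sum_add_distrib,
    sum_congr rfl hrec, sum_add_distrib]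
  congr 1
  rw [sum_range_succ', sum_range_succ, sum_congr rfl hlower]
  simp

lemma sum_normalTerm_succ (n : ℕ) :
    ∑ k ∈ range (n + 2), normalTerm x a t (n + 1) k =
      ∑ k ∈ range (n + 1), (normalCoeff n k * q ^ k) • (aeval x (h t (n + 1 - k)) * a ^ k) +
        ∑ k ∈ range (n + 1),
          (normalCoeff n k * q ^ (2 * n + 1)) • (aeval x (h t (n - k)) * a ^ (k + 1)) := by
  have hzero : normalTerm x a t (n + 1) 0 =
      (normalCoeff n 0 * q ^ 0) • (aeval x (h t (n + 1 - 0)) * a ^ 0) := by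
    simp [normalTerm, normalCoeff_zero_right]
  have hmid : ∀ k ∈ range n, normalTerm x a t (n + 1) (k + 1) =
      (normalCoeff n (k + 1) * q ^ (k + 1)) • (aeval x (h t (n + 1 - (k + 1))) * a ^ (k + 1)) +
        (normalCoeff n k * q ^ (2 * n + 1)) • (aeval x (h t (n - k)) * a ^ (k + 1)) := by
    intro k hk
    rw [normalTerm, normalCoeff_succ_succ (mem_range.1 hk), add_smul, Nat.add_sub_add_right]
  have htop : normalTerm x a t (n + 1) (n + 1) =
      (normalCoeff n n * q ^ (2 * n + 1)) • (aeval x (h t (n - n)) * a ^ (n + 1)) := by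
    rw [normalTerm, normalCoeff_self_succ, Nat.sub_self, Nat.sub_self]
  rw [sum_range_succ', sum_range_succ, sum_range_succ' _ n, sum_range_succ _ n,
    sum_congr rfl hmid, sum_add_distrib, hzero, htop]
  abel

theorem prod_add_smul_eq_sum_normalTerm (hax : a * x = q • (x * a) + t • 1) (n : ℕ) :
    ((List.range n).map fun i => x + q ^ (2 * i + 1) • a).prod =
      ∑ k ∈ range (n + 1), normalTerm x a t n k := by
  induction n with
  | zero => simp [normalTerm, normalCoeff_zero_right, h_zero]
  | succ n ih =>
    have hshift : ∀ k ∈ range (n + 1), normalTerm x a t n k * (q ^ (2 * n + 1) • a) =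
        (normalCoeff n k * q ^ (2 * n + 1)) • (aeval x (h t (n - k)) * a ^ (k + 1)) := by
      intro k _
      rw [normalTerm, mul_smul_comm, smul_mul_assoc, mul_assoc, ← pow_succ, smul_smul,
        mul_comm (q ^ _)]
    rw [List.prod_range_succ, ih, mul_add, sum_normalTerm_mul hax, sum_mul, sum_congr rfl hshift,
      sum_normalTerm_succ]

end NormalOrdering

lemma Dq_X_pow (n : ℕ) : Dq (X ^ n) = qInt n • X ^ (n - 1) := by
  have hscale : (aeval (C q * X)) (X ^ n : F[X]) - X ^ n = C (q ^ n - 1) * X ^ n := by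
    simp [mul_pow, sub_mul]
  simp only [Dq, LinearMap.smul_apply, LinearMap.comp_apply, LinearMap.sub_apply,
    AlgHom.toLinearMap_apply, LinearMap.id_apply, hscale]
  simp only [divXL, LinearMap.coe_mk, AddHom.coe_mk, divX_C_mul, divX_X_pow]
  split_ifs with hn
  · simp [hn]
  · rw [smul_eq_C_mul, smul_eq_C_mul, ← mul_assoc, ← C_mul, ← qInt_mul_q_sub_one,
      mul_comm (q - 1)⁻¹, mul_inv_cancel_right₀ q_sub_one_ne_zero]

lemma smul_Dq_mul_Xop :
    (s • Dq) * Xop = q • (Xop * (s • Dq)) + s • (1 : Module.End F F[X]) := by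
  refine (basisMonomials F).ext fun n => ?_
  simp only [coe_basisMonomials, monomial_one_right_eq_X_pow, Module.End.mul_apply,
    LinearMap.add_apply, LinearMap.smul_apply, Module.End.one_apply, Xop, LinearMap.mulLeft_apply,
    ← pow_succ', Dq_X_pow, mul_smul_comm, smul_smul, Nat.add_sub_cancel]
  cases n with
  | zero => simp [qInt]
  | succ n =>
    rw [Nat.add_sub_cancel, ← add_smul, show n + 1 + 1 = 1 + (n + 1) by ring, qInt_add]
    simp [qInt]
    ring_nf

lemma mulLeft_eq_aeval_Xop (p : F[X]) : LinearMap.mulLeft F p = aeval Xop p := by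
  rw [Xop, show LinearMap.mulLeft F (X : F[X]) = Algebra.lmul F F[X] X from rfl,
    aeval_algHom_apply, aeval_X_left_apply]
  rfl

lemma Gop_eq_prod (n : ℕ) :
    Gop n = ((List.range n).map fun i => Xop + q ^ (2 * i + 1) • (s • Dq)).prod := by
  induction n with
  | zero => rfl
  | succ n ih => rw [Gop, ih, List.prod_range_succ, smul_smul]

theorem Gop_eq (n : ℕ) :
    Gop n =
      ∑ k ∈ Finset.range (n + 1),
        (qBinom n k * q ^ (k * n)) •
          (LinearMap.mulLeft F (h s (n - k)) * (s • Dq) ^ k) := by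
  rw [Gop_eq_prod, prod_add_smul_eq_sum_normalTerm (R := Module.End F F[X]) smul_Dq_mul_Xop]
  simp only [normalTerm, normalCoeff, mulLeft_eq_aeval_Xop]

end
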